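/- arXiv:math/0306407 — 2 statements merged into one kernel-verified Lean document; each statement's English description precedes it below -/
import Mathlib

section
/- Additionally let W ≤ W' ≤ G with W of index 2 in W', and fix τ ∈ W' \ W (so τ lies in the normalizer of W). Suppose a W'-orbit in G/H is the union of exactly two distinct W-orbits a and a₁ (a chiral pair). If a is a (χ,θ)-orbit and a₁ is not a (χ,θ)-orbit, then a₁ is a (τχ,θ)-orbit and a is not a (τχ,θ)-orbit. (In the chemical interpretation: the members of a chiral pair are indistinguishable via pairs of characters.) -/
/-!
Since `W` has index two in `W'`, every element of `W' \ W` maps the `W`-orbit `a` onto the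
other `W`-orbit `a₁` inside the `W'`-orbit; this applies to both `τ` and `τ⁻¹`, so `a₁ = τa` and
`a = τa₁`. Because `τ` normalizes `W` and `(τυ)⁻¹ (τστ⁻¹) (τυ) = υ⁻¹συ`, the `(τχ, θ)`-condition
on an orbit `τc` is exactly the `(χ, θ)`-condition on `c`. Hence `a₁` is a `(τχ, θ)`-orbit
because `a` is a `(χ, θ)`-orbit, and `a` is not because `a₁` is not.
-/

/-- The conjugate character `τχ : W → ℂˣ`, `(τχ)(σ) = χ(τ⁻¹στ)`, of a
one-dimensional character `χ` of `W` by an element `τ` of the normalizer of `W`. -/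
def conjChar {G : Type*} [Group G] {W : Subgroup G} (τ : G) (hτ : τ ∈ Subgroup.normalizer (W : Set G))
    (χ : W →* ℂˣ) : W →* ℂˣ where
  toFun σ := χ ⟨τ⁻¹ * (σ : G) * τ, by
    have h := (Subgroup.mem_normalizer_iff.mp (Subgroup.inv_mem _ hτ) (σ : G)).mp σ.2
    simpa using h⟩
  map_one' := by
    rw [← χ.map_one]
    apply congrArg
    ext
    simp
  map_mul' σ τ' := by
    show χ _ = χ _ * χ _
    rw [← χ.map_mul]
    apply congrArg
    ext
    push_cast
    group

/-- A `W`-orbit `a` in `G/H` is a `(χ,θ)`-orbit if for every `υ ∈ G` with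
`υH ∈ a` and every `σ ∈ W` with `υ⁻¹συ ∈ H` one has `χ(σ)·θ(υ⁻¹συ) = 1`. -/
def IsChiThetaOrbit {G : Type*} [Group G] {H W : Subgroup G}
    (χ : W →* ℂˣ) (θ : H →* ℂˣ)
    (a : Quotient (MulAction.orbitRel W (G ⧸ H))) : Prop :=
  ∀ υ : G, Quotient.mk (MulAction.orbitRel W (G ⧸ H)) (υ : G ⧸ H) = a →
    ∀ (σ : W) (hσ : υ⁻¹ * (σ : G) * υ ∈ H),
      χ σ * θ ⟨υ⁻¹ * (σ : G) * υ, hσ⟩ = 1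

namespace MulAction

variable {G α : Type*} [Group G] [MulAction G α] {W : Subgroup G}

theorem quotient_mk_smul_eq_iff_of_mem_normalizer {g : G}
    (hg : g ∈ Subgroup.normalizer (W : Set G)) {x y : α} :
    Quotient.mk (orbitRel W α) (g • x) = Quotient.mk _ (g • y) ↔
      Quotient.mk (orbitRel W α) x = Quotient.mk _ y := by
  simp only [Quotient.eq]
  suffices ∀ g ∈ Subgroup.normalizer (W : Set G), ∀ x y : α,
      orbitRel W α x y → orbitRel W α (g • x) (g • y) from
    ⟨fun h => by simpa using this g⁻¹ (inv_mem hg) _ _ h, this g hg x y⟩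
  rintro g hg x y ⟨w, rfl⟩
  refine ⟨⟨g * w * g⁻¹, (Subgroup.mem_normalizer_iff.mp hg w).mp w.2⟩, ?_⟩
  simp [Subgroup.smul_def, smul_smul]

/-- Outside `W`, the index-two overgroup `W'` consists of the single coset `W g`. -/
theorem quotient_mk_eq_smul_of_index_two {W' : Subgroup G} (hidx : (W.subgroupOf W').index = 2)
    {g : G} (hgW' : g ∈ W') (hgW : g ∉ W) {x y : α} (hy : y ∈ orbit W' x)
    (hxy : Quotient.mk (orbitRel W α) y ≠ Quotient.mk _ x) :
    Quotient.mk (orbitRel W α) y = Quotient.mk _ (g • x) := by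
  obtain ⟨w', rfl⟩ := hy
  have hw' : (w' : G) ∉ W := fun h => hxy (Quotient.sound ⟨⟨w', h⟩, rfl⟩)
  have hw'g : (w' : G) * g⁻¹ ∈ W := by
    have := (Subgroup.mul_mem_iff_of_index_two hidx (a := w') (b := ⟨g⁻¹, inv_mem hgW'⟩)).mpr
    simpa [Subgroup.mem_subgroupOf, hw', hgW] using this
  exact Quotient.sound ⟨⟨_, hw'g⟩, by simp [Subgroup.smul_def, smul_smul]⟩

end MulAction

open MulAction

theorem isChiThetaOrbit_conjChar_iff {G : Type*} [Group G] {H W : Subgroup G} {τ : G}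
    (hτ : τ ∈ Subgroup.normalizer (W : Set G)) (χ : W →* ℂˣ) (θ : H →* ℂˣ)
    {b c : Quotient (orbitRel W (G ⧸ H))}
    (hbc : ∀ x : G ⧸ H, Quotient.mk _ x = b ↔ Quotient.mk _ (τ⁻¹ • x) = c) :
    IsChiThetaOrbit (conjChar τ hτ χ) θ b ↔ IsChiThetaOrbit χ θ c := by
  constructor
  · intro h υ hυ σ hσ
    have hυ' : Quotient.mk _ ((τ * υ : G) : G ⧸ H) = b :=
      (hbc _).mpr (by simpa [← mul_smul] using hυ)
    have hσ' : τ * σ * τ⁻¹ ∈ W := (Subgroup.mem_normalizer_iff.mp hτ σ).mp σ.2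
    have := h (τ * υ) hυ' ⟨_, hσ'⟩ (by convert hσ using 1; group)
    have hχ : conjChar τ hτ χ ⟨_, hσ'⟩ = χ σ := congrArg χ (Subtype.ext (by simp [mul_assoc]))
    rw [hχ] at this
    convert this using 4
    group
  · intro h υ hυ σ hσ
    have hσ' : τ⁻¹ * σ * τ ∈ W := by
      simpa using (Subgroup.mem_normalizer_iff.mp (inv_mem hτ) σ).mp σ.2
    have := h (τ⁻¹ * υ) ((hbc _).mp hυ) ⟨_, hσ'⟩ (by convert hσ using 1; group)
    convert this using 2
    · rfl
    · exact congrArg θ (Subtype.ext (by group))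

theorem lunn_senior_stmt16_general {G : Type*} [Group G] (H W W' : Subgroup G)
    (hidx : (W.subgroupOf W').index = 2)
    (τ : G) (hτW' : τ ∈ W') (hτW : τ ∉ W) (hτn : τ ∈ Subgroup.normalizer (W : Set G))
    (χ : W →* ℂˣ) (θ : H →* ℂˣ)
    (A B : G ⧸ H)
    (a a₁ : Quotient (MulAction.orbitRel W (G ⧸ H)))
    (ha : Quotient.mk (MulAction.orbitRel W (G ⧸ H)) A = a)
    (ha₁ : Quotient.mk (MulAction.orbitRel W (G ⧸ H)) B = a₁)
    (hne : a ≠ a₁)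
    (hsame : B ∈ MulAction.orbit W' A)
    (haOrb : IsChiThetaOrbit χ θ a) (ha₁Orb : ¬ IsChiThetaOrbit χ θ a₁) :
    IsChiThetaOrbit (conjChar τ hτn χ) θ a₁ ∧
      ¬ IsChiThetaOrbit (conjChar τ hτn χ) θ a := by
  subst ha ha₁
  have hBτA : Quotient.mk (orbitRel W (G ⧸ H)) B = Quotient.mk _ (τ • A) :=
    quotient_mk_eq_smul_of_index_two hidx hτW' hτW hsame hne.symm
  have hBτ'A : Quotient.mk (orbitRel W (G ⧸ H)) B = Quotient.mk _ (τ⁻¹ • A) :=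
    quotient_mk_eq_smul_of_index_two hidx (inv_mem hτW') (by simpa using hτW) hsame hne.symm
  -- Stated at `G ⧸ H` so that `rw` sees the action instance `mulLeftCosetsCompSubtypeVal`.
  have hτ' (x y : G ⧸ H) : Quotient.mk (orbitRel W (G ⧸ H)) (τ⁻¹ • x) = Quotient.mk _ (τ⁻¹ • y) ↔
      Quotient.mk (orbitRel W (G ⧸ H)) x = Quotient.mk _ y :=
    quotient_mk_smul_eq_iff_of_mem_normalizer (inv_mem hτn)
  refine ⟨(isChiThetaOrbit_conjChar_iff hτn χ θ fun x => ?_).mpr haOrb,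
    fun h => ha₁Orb ((isChiThetaOrbit_conjChar_iff hτn χ θ fun x => ?_).mp h)⟩
  · rw [hBτA, ← hτ', inv_smul_smul]
  · rw [hBτ'A, ← hτ']

/-- Let `W ≤ W'` with `W` of index 2 in `W'` and `τ ∈ W' \ W`
(so `τ` normalizes `W`).  Suppose a `W'`-orbit in `G/H` is the union of exactly
two distinct `W`-orbits `a` and `a₁` (a chiral pair).  If `a` is a `(χ,θ)`-orbit
and `a₁` is not, then `a₁` is a `(τχ,θ)`-orbit and `a` is not: the members of a
chiral pair are indistinguishable via pairs of characters. -/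
theorem lunn_senior_stmt16 {G : Type*} [Group G] (H W W' : Subgroup G)
    (hWW' : W ≤ W') (hidx : (W.subgroupOf W').index = 2)
    (τ : G) (hτW' : τ ∈ W') (hτW : τ ∉ W) (hτn : τ ∈ Subgroup.normalizer (W : Set G))
    (χ : W →* ℂˣ) (θ : H →* ℂˣ)
    (A B : G ⧸ H)
    (a a₁ : Quotient (MulAction.orbitRel W (G ⧸ H)))
    (ha : Quotient.mk (MulAction.orbitRel W (G ⧸ H)) A = a)
    (ha₁ : Quotient.mk (MulAction.orbitRel W (G ⧸ H)) B = a₁)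
    (hne : a ≠ a₁)
    (hsame : B ∈ MulAction.orbit W' A)
    (honlytwo : ∀ C ∈ MulAction.orbit W' A,
      Quotient.mk (MulAction.orbitRel W (G ⧸ H)) C = a ∨
      Quotient.mk (MulAction.orbitRel W (G ⧸ H)) C = a₁)
    (haOrb : IsChiThetaOrbit χ θ a) (ha₁Orb : ¬ IsChiThetaOrbit χ θ a₁) :
    IsChiThetaOrbit (conjChar τ hτn χ) θ a₁ ∧
      ¬ IsChiThetaOrbit (conjChar τ hτn χ) θ a :=
  lunn_senior_stmt16_general H W W' hidx τ hτW' hτW hτn χ θ A B a a₁ ha ha₁ hne hsame haOrb ha₁Orb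
end

section
/- The subgroup of level-preserving order automorphisms α of the poset Q that map every chiral pair onto a chiral pair (that is, for each C ∈ 𝒞, the image α(C) again belongs to 𝒞) is isomorphic to the direct product S₂ × S₂, generated by the automorphism that simultaneously swaps a₄₂ ↔ b₄₂, a₃₂ ↔ b₃₂, a₄₁₁ ↔ b₄₁₁ (fixing all other elements) and the automorphism that swaps e₄₁₁ ↔ f₄₁₁ (fixing all other elements). -/
/-!
A level-preserving order automorphism `β` keeps the level of every point and its comparabilities
with every point that `β` fixes, so a point singled out by this data among the points of its level
is fixed as well. Chirality forces `β` to map the only chiral pair of level `(4,2)`, `{a₄₂, b₄₂}`,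
onto itself; composing with the first `S₂` we may assume `a₄₂` and `b₄₂` fixed. Then `e₃₂` (below
neither) and `e₄₂` (the only `(4,2)`-point above `e₃₂`) are fixed, so `e₄₁₁` goes to `e₄₁₁` or
`f₄₁₁`; composing with the second `S₂` we may assume `e₄₁₁` fixed. Now `c₄₂` is pinned down, and
every point is singled out by its comparabilities with `a₄₂, b₄₂, c₄₂, e₄₁₁`, so `β = 1`.
-/

/-- The 15 substitution isomers of cyclopropane with empirical formulae in
`D = {(6),(5,1),(4,2),(4,1²),(3²)}` (the poset `T₍D;G₎`, `G ≤ S₆` dihedral of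
order 6). -/
inductive CycQ : Type
  | a6 | a51 | a42 | b42 | c42 | e42 | a32 | b32 | c32 | e32
  | a411 | b411 | c411 | e411 | f411
  deriving DecidableEq

open CycQ in
instance : Fintype CycQ :=
  Fintype.ofList [a6, a51, a42, b42, c42, e42, a32, b32, c32, e32,
    a411, b411, c411, e411, f411] (fun x => by cases x <;> decide)

open CycQ in
/-- The level function, encoding the levels `(6), (5,1), (4,2), (3²), (4,1²)`
by `5, 4, 3, 2, 1` respectively. -/
def cycLevel : CycQ → ℕ
  | a6 => 5
  | a51 => 4
  | a42 | b42 | c42 | e42 => 3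
  | a32 | b32 | c32 | e32 => 2
  | a411 | b411 | c411 | e411 | f411 => 1

open CycQ in
/-- The covering relations of the cyclopropane poset. -/
def cycCovers : List (CycQ × CycQ) :=
  [(a51, a6),
   (a42, a51), (b42, a51), (c42, a51), (e42, a51),
   (b32, a42), (c32, a42),
   (a32, b42), (c32, b42),
   (a32, c42), (b32, c42),
   (a32, e42), (b32, e42), (c32, e42), (e32, e42),
   (a411, a42), (b411, b42), (c411, c42), (e411, e42), (f411, e42)]

/-- The partial order of the cyclopropane poset: the reflexive-transitive closure
of the covering relations. -/
def cycLE : CycQ → CycQ → Prop :=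
  Relation.ReflTransGen (fun x y => (x, y) ∈ cycCovers)

/-- The group of level-preserving order automorphisms of the cyclopropane poset. -/
def cycAut : Subgroup (Equiv.Perm CycQ) where
  carrier := {α | (∀ x, cycLevel (α x) = cycLevel x) ∧
    ∀ x y, cycLE (α x) (α y) ↔ cycLE x y}
  one_mem' := by
    constructor <;> simp
  mul_mem' := by
    rintro α β ⟨hα1, hα2⟩ ⟨hβ1, hβ2⟩
    constructor
    · intro x
      simp only [Equiv.Perm.mul_apply]
      rw [hα1, hβ1]
    · intro x y
      simp only [Equiv.Perm.mul_apply]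
      rw [hα2, hβ2]
  inv_mem' := by
    rintro α ⟨hα1, hα2⟩
    constructor
    · intro x
      conv_rhs => rw [← (show α (α⁻¹ x) = x from Equiv.apply_symm_apply α x)]
      rw [hα1]
    · intro x y
      conv_rhs => rw [← (show α (α⁻¹ x) = x from Equiv.apply_symm_apply α x),
        ← (show α (α⁻¹ y) = y from Equiv.apply_symm_apply α y)]
      rw [hα2]

/-- The set of chiral pairs of the cyclopropane poset:
`𝒞 = {{a₄₂,b₄₂}, {a₃₂,b₃₂}, {a₄₁₁,b₄₁₁}, {e₄₁₁,f₄₁₁}}`. -/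
def chiralPairs : Set (Set CycQ) :=
  {{CycQ.a42, CycQ.b42}, {CycQ.a32, CycQ.b32},
   {CycQ.a411, CycQ.b411}, {CycQ.e411, CycQ.f411}}

/-- The subgroup of level-preserving order automorphisms of the cyclopropane
poset that map every chiral pair onto a chiral pair. -/
def cycChiralAut : Subgroup (Equiv.Perm CycQ) where
  carrier := {α | α ∈ cycAut ∧ ∀ C ∈ chiralPairs, (⇑α) '' C ∈ chiralPairs}
  one_mem' := by
    refine ⟨cycAut.one_mem, ?_⟩
    intro C hC
    simpa using hC
  mul_mem' := by
    rintro α β ⟨hα, hαC⟩ ⟨hβ, hβC⟩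
    refine ⟨cycAut.mul_mem hα hβ, ?_⟩
    intro C hC
    have : (⇑(α * β)) '' C = (⇑α) '' ((⇑β) '' C) := by
      rw [← Set.image_comp]
      rfl
    rw [this]
    exact hαC _ (hβC _ hC)
  inv_mem' := by
    rintro α ⟨hα, hαC⟩
    refine ⟨cycAut.inv_mem hα, ?_⟩
    haveI : Finite ↥chiralPairs := (Set.toFinite chiralPairs).to_subtype
    set g : ↥chiralPairs → ↥chiralPairs := fun C => ⟨(⇑α) '' C.1, hαC C.1 C.2⟩ with hg
    have hginj : Function.Injective g := by
      intro C D h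
      have h' : (⇑α) '' C.1 = (⇑α) '' D.1 := congrArg Subtype.val h
      exact Subtype.ext (Set.image_injective.mpr α.injective h')
    have hgsurj : Function.Surjective g := Finite.surjective_of_injective hginj
    intro C hC
    obtain ⟨⟨D, hD⟩, hDeq⟩ := hgsurj ⟨C, hC⟩
    have h1 : (⇑α) '' D = C := congrArg Subtype.val hDeq
    have h2 : (⇑α⁻¹) '' C = D := by
      rw [← h1, ← Set.image_comp]
      have : (⇑α⁻¹) ∘ (⇑α) = id := by
        funext x
        simp
      rw [this, Set.image_id]
    rw [h2]
    exact hD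

/-- The pair `{a₄₂, b₄₂}`. -/
def cycAB42 : Fin 2 → CycQ := ![CycQ.a42, CycQ.b42]

/-- The pair `{a₃₂, b₃₂}`. -/
def cycAB32 : Fin 2 → CycQ := ![CycQ.a32, CycQ.b32]

/-- The pair `{a₄₁₁, b₄₁₁}`. -/
def cycAB411 : Fin 2 → CycQ := ![CycQ.a411, CycQ.b411]

/-- The pair `{e₄₁₁, f₄₁₁}`. -/
def cycEF : Fin 2 → CycQ := ![CycQ.e411, CycQ.f411]

section Reachability

variable {X : Type*} [DecidableEq X]

def reachableWithin (l : List (X × X)) : ℕ → X → List X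
  | 0, x => [x]
  | n + 1, x => x :: l.flatMap fun p => if p.1 = x then reachableWithin l n p.2 else []

theorem self_mem_reachableWithin (l : List (X × X)) (n : ℕ) (x : X) :
    x ∈ reachableWithin l n x := by
  cases n <;> simp [reachableWithin]

theorem reflTransGen_of_mem_reachableWithin {l : List (X × X)} {n : ℕ} {x y : X}
    (h : y ∈ reachableWithin l n x) : Relation.ReflTransGen (fun a b => (a, b) ∈ l) x y := by
  induction n generalizing x with
  | zero =>
    obtain rfl : y = x := by simpa [reachableWithin] using h
    exact .refl
  | succ n ih =>
    simp only [reachableWithin, List.mem_cons, List.mem_flatMap] at h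
    rcases h with rfl | ⟨⟨a, b⟩, hab, hy⟩
    · exact .refl
    · split_ifs at hy with hax
      · exact .head (hax ▸ hab) (ih hy)
      · simp at hy

theorem mem_reachableWithin_of_reflTransGen {l : List (X × X)} {n : ℕ} {x y : X}
    (hclosed : ∀ p ∈ l, p.1 ∈ reachableWithin l n x → p.2 ∈ reachableWithin l n x)
    (h : Relation.ReflTransGen (fun a b => (a, b) ∈ l) x y) : y ∈ reachableWithin l n x := by
  induction h with
  | refl => exact self_mem_reachableWithin l n x
  | tail _ hbc ih => exact hclosed _ hbc ih

end Reachability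

section Profile

variable {X L : Type*} (ℓ : X → L) (r : X → X → Prop)

def SameProfile (F : Finset X) (x y : X) : Prop :=
  ℓ y = ℓ x ∧ ∀ f ∈ F, (r y f ↔ r x f) ∧ (r f y ↔ r f x)

instance [DecidableEq L] [DecidableRel r] (F : Finset X) (x y : X) :
    Decidable (SameProfile ℓ r F x y) := by
  unfold SameProfile; infer_instance

variable {ℓ r}

theorem sameProfile_apply {β : X → X} (hℓ : ∀ x, ℓ (β x) = ℓ x)
    (hr : ∀ x y, r (β x) (β y) ↔ r x y) {F : Finset X} (hF : ∀ f ∈ F, β f = f) (x : X) :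
    SameProfile ℓ r F x (β x) := by
  refine ⟨hℓ x, fun f hf => ?_⟩
  have hxf := hr x f
  have hfx := hr f x
  rw [hF f hf] at hxf hfx
  exact ⟨hxf, hfx⟩

theorem apply_eq_self_of_sameProfile {β : X → X} (hℓ : ∀ x, ℓ (β x) = ℓ x)
    (hr : ∀ x y, r (β x) (β y) ↔ r x y) {F : Finset X} (hF : ∀ f ∈ F, β f = f) {x : X}
    (hx : ∀ y, SameProfile ℓ r F x y → y = x) : β x = x :=
  hx _ (sameProfile_apply hℓ hr hF x)

end Profile

theorem Equiv.Perm.eq_one_or_eq_swap_of_fin_two (π : Equiv.Perm (Fin 2)) :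
    π = 1 ∨ π = Equiv.swap 0 1 := by
  revert π; decide

section PairsIndexedByFinTwo

variable {X : Type*}

theorem exists_perm_of_pair_eq {f g : Fin 2 → X} (h : ({f 0, f 1} : Set X) = {g 0, g 1}) :
    ∃ π : Equiv.Perm (Fin 2), ∀ i, f i = g (π i) := by
  rcases Set.pair_eq_pair_iff.1 h with ⟨h0, h1⟩ | ⟨h0, h1⟩
  · exact ⟨1, Fin.forall_fin_two.2 ⟨h0, h1⟩⟩
  · exact ⟨Equiv.swap 0 1, Fin.forall_fin_two.2 ⟨h0, h1⟩⟩

theorem image_pair_eq_of_apply_eq {α : X → X} {g : Fin 2 → X} {π : Equiv.Perm (Fin 2)}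
    (h : ∀ i, α (g i) = g (π i)) : α '' {g 0, g 1} = {g 0, g 1} := by
  rw [Set.image_pair, h, h]
  rcases π.eq_one_or_eq_swap_of_fin_two with rfl | rfl
  · rfl
  · exact Set.pair_comm _ _

end PairsIndexedByFinTwo

open CycQ

-- Every chain of covers in `Q` has at most three steps.
set_option maxRecDepth 10000 in
theorem cycLE_iff_mem_reachableWithin {x y : CycQ} :
    cycLE x y ↔ y ∈ reachableWithin cycCovers 3 x :=
  ⟨mem_reachableWithin_of_reflTransGen (by revert x; decide),
    reflTransGen_of_mem_reachableWithin⟩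

instance : DecidableRel cycLE := fun _ _ =>
  decidable_of_iff _ cycLE_iff_mem_reachableWithin.symm

def pairAction (π ρ : Equiv.Perm (Fin 2)) : CycQ → CycQ
  | a42 => cycAB42 (π 0)
  | b42 => cycAB42 (π 1)
  | a32 => cycAB32 (π 0)
  | b32 => cycAB32 (π 1)
  | a411 => cycAB411 (π 0)
  | b411 => cycAB411 (π 1)
  | e411 => cycEF (ρ 0)
  | f411 => cycEF (ρ 1)
  | x => x

instance : MulAction (Equiv.Perm (Fin 2) × Equiv.Perm (Fin 2)) CycQ where
  smul p := pairAction p.1 p.2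
  one_smul := by decide
  mul_smul := by decide

def pairPerm : Equiv.Perm (Fin 2) × Equiv.Perm (Fin 2) →* Equiv.Perm CycQ :=
  MulAction.toPermHom _ _

theorem pairPerm_injective : Function.Injective pairPerm := by decide

theorem mem_cycAut_iff {α : Equiv.Perm CycQ} : α ∈ cycAut ↔
    (∀ x, cycLevel (α x) = cycLevel x) ∧ ∀ x y, cycLE (α x) (α y) ↔ cycLE x y :=
  Iff.rfl

theorem pairPerm_mem_cycAut (p : Equiv.Perm (Fin 2) × Equiv.Perm (Fin 2)) :
    pairPerm p ∈ cycAut := by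
  revert p
  simp only [mem_cycAut_iff]
  decide

section PairPermApply

variable (π ρ : Equiv.Perm (Fin 2))

theorem pairPerm_apply_cycAB42 (i : Fin 2) : pairPerm (π, ρ) (cycAB42 i) = cycAB42 (π i) := by
  fin_cases i <;> rfl

theorem pairPerm_apply_cycAB32 (i : Fin 2) : pairPerm (π, ρ) (cycAB32 i) = cycAB32 (π i) := by
  fin_cases i <;> rfl

theorem pairPerm_apply_cycAB411 (i : Fin 2) :
    pairPerm (π, ρ) (cycAB411 i) = cycAB411 (π i) := by
  fin_cases i <;> rfl

theorem pairPerm_apply_cycEF (j : Fin 2) : pairPerm (π, ρ) (cycEF j) = cycEF (ρ j) := by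
  fin_cases j <;> rfl

end PairPermApply

theorem pairPerm_mem_cycChiralAut (p : Equiv.Perm (Fin 2) × Equiv.Perm (Fin 2)) :
    pairPerm p ∈ cycChiralAut := by
  refine ⟨pairPerm_mem_cycAut p, ?_⟩
  intro C hC
  suffices pairPerm p '' C = C by rwa [this]
  simp only [chiralPairs, Set.mem_insert_iff, Set.mem_singleton_iff] at hC
  rcases hC with rfl | rfl | rfl | rfl
  exacts [image_pair_eq_of_apply_eq (g := cycAB42) (pairPerm_apply_cycAB42 p.1 p.2),
    image_pair_eq_of_apply_eq (g := cycAB32) (pairPerm_apply_cycAB32 p.1 p.2),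
    image_pair_eq_of_apply_eq (g := cycAB411) (pairPerm_apply_cycAB411 p.1 p.2),
    image_pair_eq_of_apply_eq (g := cycEF) (pairPerm_apply_cycEF p.1 p.2)]

theorem eq_of_mem_chiralPairs_of_level_eq_three {C : Set CycQ} (hC : C ∈ chiralPairs)
    {x : CycQ} (hx : x ∈ C) (hlevel : cycLevel x = 3) : C = {a42, b42} := by
  simp only [chiralPairs, Set.mem_insert_iff, Set.mem_singleton_iff] at hC
  rcases hC with rfl | rfl | rfl | rfl <;>
    simp only [Set.mem_insert_iff, Set.mem_singleton_iff] at hx <;>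
    rcases hx with rfl | rfl <;> first | rfl | simp [cycLevel] at hlevel

theorem exists_perm_apply_cycAB42 {α : Equiv.Perm CycQ} (hα : α ∈ cycChiralAut) :
    ∃ π : Equiv.Perm (Fin 2), ∀ i, α (cycAB42 i) = cycAB42 (π i) := by
  have himage : α '' {a42, b42} ∈ chiralPairs := hα.2 _ (by simp [chiralPairs])
  have hpair : α '' {a42, b42} = {a42, b42} :=
    eq_of_mem_chiralPairs_of_level_eq_three himage (Set.mem_image_of_mem α (by simp))
      (hα.1.1 a42)
  rw [Set.image_pair] at hpair
  exact exists_perm_of_pair_eq (f := fun i => α (cycAB42 i)) hpair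

section Rigidity

variable {β : Equiv.Perm CycQ}

theorem apply_e411_of_fixes (hβ : β ∈ cycAut) (ha : β a42 = a42) (hb : β b42 = b42) :
    β e411 = e411 ∨ β e411 = f411 := by
  have he32 : β e32 = e32 :=
    apply_eq_self_of_sameProfile hβ.1 hβ.2 (F := {a42, b42}) (by simp [ha, hb]) (by decide)
  have he42 : β e42 = e42 :=
    apply_eq_self_of_sameProfile hβ.1 hβ.2 (F := {e32}) (by simp [he32]) (by decide)
  exact (by decide : ∀ y, SameProfile cycLevel cycLE {e42} e411 y → y = e411 ∨ y = f411) _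
    (sameProfile_apply hβ.1 hβ.2 (by simp [he42]) e411)

theorem eq_one_of_fixes (hβ : β ∈ cycAut) (ha : β a42 = a42) (hb : β b42 = b42)
    (he : β e411 = e411) : β = 1 := by
  have hc : β c42 = c42 :=
    apply_eq_self_of_sameProfile hβ.1 hβ.2 (F := {a42, b42, e411}) (by simp [ha, hb, he])
      (by decide)
  ext x
  exact apply_eq_self_of_sameProfile hβ.1 hβ.2 (F := {a42, b42, c42, e411})
    (by simp [ha, hb, hc, he]) (by revert x; decide)

end Rigidity

theorem eq_of_apply_eq {α β : Equiv.Perm CycQ} (hα : α ∈ cycAut) (hβ : β ∈ cycAut)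
    (ha : α a42 = β a42) (hb : α b42 = β b42) (he : α e411 = β e411) : α = β := by
  refine inv_mul_eq_one.1 (eq_one_of_fixes (cycAut.mul_mem (cycAut.inv_mem hα) hβ) ?_ ?_ ?_) <;>
    rw [Equiv.Perm.mul_apply, Equiv.Perm.inv_eq_iff_eq]
  exacts [ha.symm, hb.symm, he.symm]

theorem exists_eq_pairPerm_of_fixes {β : Equiv.Perm CycQ} (hβ : β ∈ cycAut)
    (ha : β a42 = a42) (hb : β b42 = b42) : ∃ ρ, β = pairPerm (1, ρ) := by
  obtain ⟨ρ, hρ⟩ : ∃ ρ : Equiv.Perm (Fin 2), β e411 = cycEF (ρ 0) := by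
    rcases apply_e411_of_fixes hβ ha hb with h | h
    exacts [⟨1, h⟩, ⟨Equiv.swap 0 1, h⟩]
  exact ⟨ρ, eq_of_apply_eq hβ (pairPerm_mem_cycAut _) ha hb hρ⟩

theorem exists_pairPerm_eq {α : Equiv.Perm CycQ} (hα : α ∈ cycChiralAut) :
    ∃ p, pairPerm p = α := by
  obtain ⟨π, hπ⟩ := exists_perm_apply_cycAB42 hα
  have hfix : ∀ i, ((pairPerm (π, 1))⁻¹ * α) (cycAB42 i) = cycAB42 i := fun i => by
    rw [Equiv.Perm.mul_apply, Equiv.Perm.inv_eq_iff_eq, hπ, pairPerm_apply_cycAB42]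
  obtain ⟨ρ, hρ⟩ := exists_eq_pairPerm_of_fixes
    (cycAut.mul_mem (cycAut.inv_mem (pairPerm_mem_cycAut _)) hα.1) (hfix 0) (hfix 1)
  rw [inv_mul_eq_iff_eq_mul, ← map_mul, Prod.mk_mul_mk, mul_one, one_mul] at hρ
  exact ⟨(π, ρ), hρ.symm⟩

noncomputable def cycChiralAutEquiv : Equiv.Perm (Fin 2) × Equiv.Perm (Fin 2) ≃* cycChiralAut :=
  MulEquiv.ofBijective (pairPerm.codRestrict cycChiralAut pairPerm_mem_cycChiralAut)
    ⟨fun _ _ h => pairPerm_injective (congrArg Subtype.val h),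
      fun α => (exists_pairPerm_eq α.2).imp fun _ hp => Subtype.ext hp⟩

/-- The subgroup of level-preserving order automorphisms of the
cyclopropane poset mapping every chiral pair onto a chiral pair is isomorphic to
`S₂ × S₂`, generated by the automorphism simultaneously swapping
`a₄₂ ↔ b₄₂`, `a₃₂ ↔ b₃₂`, `a₄₁₁ ↔ b₄₁₁` and the automorphism swapping
`e₄₁₁ ↔ f₄₁₁` (each fixing all other elements). -/
theorem lunn_senior_stmt19 :
    ∃ Φ : Equiv.Perm (Fin 2) × Equiv.Perm (Fin 2) ≃* cycChiralAut,
      ∀ (π ρ : Equiv.Perm (Fin 2)),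
        ((Φ (π, ρ) : Equiv.Perm CycQ) CycQ.a6 = CycQ.a6) ∧
        ((Φ (π, ρ) : Equiv.Perm CycQ) CycQ.a51 = CycQ.a51) ∧
        ((Φ (π, ρ) : Equiv.Perm CycQ) CycQ.c42 = CycQ.c42) ∧
        ((Φ (π, ρ) : Equiv.Perm CycQ) CycQ.e42 = CycQ.e42) ∧
        ((Φ (π, ρ) : Equiv.Perm CycQ) CycQ.c32 = CycQ.c32) ∧
        ((Φ (π, ρ) : Equiv.Perm CycQ) CycQ.e32 = CycQ.e32) ∧
        ((Φ (π, ρ) : Equiv.Perm CycQ) CycQ.c411 = CycQ.c411) ∧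
        (∀ i, (Φ (π, ρ) : Equiv.Perm CycQ) (cycAB42 i) = cycAB42 (π i)) ∧
        (∀ i, (Φ (π, ρ) : Equiv.Perm CycQ) (cycAB32 i) = cycAB32 (π i)) ∧
        (∀ i, (Φ (π, ρ) : Equiv.Perm CycQ) (cycAB411 i) = cycAB411 (π i)) ∧
        (∀ j, (Φ (π, ρ) : Equiv.Perm CycQ) (cycEF j) = cycEF (ρ j)) :=
  ⟨cycChiralAutEquiv, fun π ρ => ⟨rfl, rfl, rfl, rfl, rfl, rfl, rfl,
    pairPerm_apply_cycAB42 π ρ, pairPerm_apply_cycAB32 π ρ, pairPerm_apply_cycAB411 π ρ,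
    pairPerm_apply_cycEF π ρ⟩⟩
end
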